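/- arXiv:1508.03712 — 3 statements merged into one kernel-verified Lean document; each statement's English description precedes it below -/
import Mathlib

section
/- Let Ω be a topological space, 𝒜 a collection of nonempty closed Borel subsets of Ω, and ⊥ an 𝒜-separation relation. If A₁, …, A_k ∈ 𝒜 are pairwise ⊥-separated, A′₁, …, A′_{k′} ∈ 𝒜 are pairwise ⊥-separated, and A₁ ∪ … ∪ A_k = A′₁ ∪ … ∪ A′_{k′}, then the two families coincide as sets: {A₁, …, A_k} = {A′₁, …, A′_{k′}} (in particular k = k′). -/
/-!
By `𝒜`-connectedness every member of either family lies inside a single member of the other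
family, so the two families refine each other. A member of a
`⊥`-separated family of nonempty sets cannot lie inside a different member, since it would then
be `⊥`-separated from itself. So both families are `⊆`-antichains, and two antichains refining
each other coincide; injectivity of the indexing then gives `k = k'`.
-/

open Set Function

theorem IsAntichain.subset_of_forall_exists_le {α : Type*} [PartialOrder α] {s t : Set α}
    (hs : IsAntichain (· ≤ ·) s) (hst : ∀ a ∈ s, ∃ b ∈ t, a ≤ b)
    (hts : ∀ b ∈ t, ∃ a ∈ s, b ≤ a) : s ⊆ t := by
  intro a ha
  obtain ⟨b, hb, hab⟩ := hst a ha
  obtain ⟨a', ha', hba'⟩ := hts b hb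
  obtain rfl : a = a' := hs.eq ha ha' (hab.trans hba')
  rwa [le_antisymm hab hba']

theorem IsAntichain.eq_of_forall_exists_le {α : Type*} [PartialOrder α] {s t : Set α}
    (hs : IsAntichain (· ≤ ·) s) (ht : IsAntichain (· ≤ ·) t)
    (hst : ∀ a ∈ s, ∃ b ∈ t, a ≤ b) (hts : ∀ b ∈ t, ∃ a ∈ s, b ≤ a) : s = t :=
  (hs.subset_of_forall_exists_le hst hts).antisymm (ht.subset_of_forall_exists_le hts hst)

section Separation

variable {Ω ι : Type*} {perp : Set Ω → Set Ω → Prop} {A : ι → Set Ω}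

theorem eq_of_subset_of_pairwise_perp (hrefl : ∀ B : Set Ω, perp B B → B = ∅)
    (hmono : ∀ A A' B : Set Ω, A ⊆ A' → perp A' B → perp A B) (hsep : Pairwise (perp on A))
    {i j : ι} (hne : (A i).Nonempty) (hij : A i ⊆ A j) : i = j := by
  by_contra h
  exact hne.ne_empty (hrefl _ (hmono _ _ _ hij (hsep (Ne.symm h))))

theorem injective_of_pairwise_perp (hrefl : ∀ B : Set Ω, perp B B → B = ∅)
    (hmono : ∀ A A' B : Set Ω, A ⊆ A' → perp A' B → perp A B) (hsep : Pairwise (perp on A))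
    (hne : ∀ i, (A i).Nonempty) : Injective A := fun _ _ h =>
  eq_of_subset_of_pairwise_perp hrefl hmono hsep (hne _) h.subset

theorem isAntichain_range_of_pairwise_perp (hrefl : ∀ B : Set Ω, perp B B → B = ∅)
    (hmono : ∀ A A' B : Set Ω, A ⊆ A' → perp A' B → perp A B) (hsep : Pairwise (perp on A))
    (hne : ∀ i, (A i).Nonempty) : IsAntichain (· ⊆ ·) (range A) := by
  rintro _ ⟨i, rfl⟩ _ ⟨j, rfl⟩ hAij hsub
  exact hAij (congrArg A (eq_of_subset_of_pairwise_perp hrefl hmono hsep (hne i) hsub))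

theorem forall_mem_range_exists_superset [TopologicalSpace Ω] {𝒜 : Set (Set Ω)}
    (hconn : ∀ A ∈ 𝒜, ∀ (k : ℕ) (B : Fin k → Set Ω), (∀ i, IsClosed (B i)) →
      Pairwise (perp on B) → A ⊆ ⋃ i, B i → ∃ i, A ⊆ B i)
    {k : ℕ} {B : Fin k → Set Ω} (hA : ∀ i, A i ∈ 𝒜) (hB : ∀ j, IsClosed (B j))
    (hsep : Pairwise (perp on B)) (hAB : ⋃ i, A i ⊆ ⋃ j, B j) :
    ∀ S ∈ range A, ∃ T ∈ range B, S ⊆ T := by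
  rintro _ ⟨i, rfl⟩
  obtain ⟨j, hj⟩ := hconn _ (hA i) k B hB hsep ((subset_iUnion A i).trans hAB)
  exact ⟨B j, mem_range_self j, hj⟩

end Separation

theorem separation_decomposition_unique_general {Ω : Type*} [TopologicalSpace Ω]
    [MeasurableSpace Ω]
    (𝒜 : Set (Set Ω))
    (h𝒜 : ∀ A ∈ 𝒜, A.Nonempty ∧ IsClosed A ∧ MeasurableSet A)
    (perp : Set Ω → Set Ω → Prop)
    (hrefl : ∀ B : Set Ω, perp B B → B = ∅)
    (hmono : ∀ A A' B : Set Ω, A ⊆ A' → perp A' B → perp A B)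
    (hconn : ∀ A ∈ 𝒜, ∀ (k : ℕ) (B : Fin k → Set Ω), (∀ i, IsClosed (B i)) →
      (∀ i j, i ≠ j → perp (B i) (B j)) → A ⊆ ⋃ i, B i → ∃ i, A ⊆ B i)
    (k k' : ℕ) (A : Fin k → Set Ω) (A' : Fin k' → Set Ω)
    (hA : ∀ i, A i ∈ 𝒜) (hA' : ∀ i, A' i ∈ 𝒜)
    (hAsep : ∀ i j, i ≠ j → perp (A i) (A j))
    (hA'sep : ∀ i j, i ≠ j → perp (A' i) (A' j))
    (hunion : ⋃ i, A i = ⋃ i, A' i) :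
    Set.range A = Set.range A' ∧ k = k' := by
  have hne : ∀ i, (A i).Nonempty := fun i => (h𝒜 _ (hA i)).1
  have hne' : ∀ i, (A' i).Nonempty := fun i => (h𝒜 _ (hA' i)).1
  have hrange : range A = range A' :=
    (isAntichain_range_of_pairwise_perp hrefl hmono hAsep hne).eq_of_forall_exists_le
      (isAntichain_range_of_pairwise_perp hrefl hmono hA'sep hne')
      (forall_mem_range_exists_superset hconn hA (fun j => (h𝒜 _ (hA' j)).2.1) hA'sep
        hunion.subset)
      (forall_mem_range_exists_superset hconn hA' (fun i => (h𝒜 _ (hA i)).2.1) hAsep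
        hunion.superset)
  refine ⟨hrange, ?_⟩
  have hcard := congrArg (fun s : Set (Set Ω) => Nat.card s) hrange
  rwa [Nat.card_range_of_injective (injective_of_pairwise_perp hrefl hmono hAsep hne),
    Nat.card_range_of_injective (injective_of_pairwise_perp hrefl hmono hA'sep hne'),
    Nat.card_fin, Nat.card_fin] at hcard

/-- For an `𝒜`-separation relation, two pairwise `⊥`-separated families from `𝒜`
with the same union coincide as sets (in particular they have the same number of elements). -/
theorem separation_decomposition_unique {Ω : Type*} [TopologicalSpace Ω]
    [MeasurableSpace Ω] [BorelSpace Ω]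
    (𝒜 : Set (Set Ω))
    (h𝒜 : ∀ A ∈ 𝒜, A.Nonempty ∧ IsClosed A ∧ MeasurableSet A)
    (perp : Set Ω → Set Ω → Prop)
    (hsymm : ∀ A B : Set Ω, perp A B → perp B A)
    (hrefl : ∀ B : Set Ω, perp B B → B = ∅)
    (hmono : ∀ A A' B : Set Ω, A ⊆ A' → perp A' B → perp A B)
    (hconn : ∀ A ∈ 𝒜, ∀ (k : ℕ) (B : Fin k → Set Ω), (∀ i, IsClosed (B i)) →
      (∀ i j, i ≠ j → perp (B i) (B j)) → A ⊆ ⋃ i, B i → ∃ i, A ⊆ B i)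
    (k k' : ℕ) (A : Fin k → Set Ω) (A' : Fin k' → Set Ω)
    (hA : ∀ i, A i ∈ 𝒜) (hA' : ∀ i, A' i ∈ 𝒜)
    (hAsep : ∀ i j, i ≠ j → perp (A i) (A j))
    (hA'sep : ∀ i j, i ≠ j → perp (A' i) (A' j))
    (hunion : ⋃ i, A i = ⋃ i, A' i) :
    Set.range A = Set.range A' ∧ k = k' :=
  separation_decomposition_unique_general 𝒜 h𝒜 perp hrefl hmono hconn k k' A A' hA hA' hAsep hA'sep
    hunion
end

section
/- Let Ω be a Hausdorff space, 𝒜 a collection of nonempty closed Borel subsets of Ω, ⊥ an 𝒜-separation relation, and (Q_A)_{A∈𝒜} a family of inner regular Borel probability measures on Ω satisfying fittedness (supp Q_A = A for all A ∈ 𝒜) and flatness (for all A, A′ ∈ 𝒜 with A ⊆ A′, either Q_{A′}(A) = 0 or Q_A(B) = Q_{A′}(B ∩ A)/Q_{A′}(A) for every Borel set B). Suppose F and F′ are finite ⊥-forests with values in 𝒜 (i.e., finite subsets of 𝒜 such that any two elements are either ⊥-separated or one is contained in the other) and α : F → (0, ∞), α′ : F′ → (0, ∞) are such that Σ_{A∈F}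 α(A)·Q_A = Σ_{A∈F′} α′(A)·Q_A as measures. Then F = F′ and α(A) = α′(A) for all A ∈ F; moreover, the support of this measure equals ⋃_{A∈F} A. -/
/-!
The measure `μ = ∑_{A ∈ F} α_A Q_A` has support `⋃ F`, so two representations have the same
ground, and by `𝒜`-connectedness they then have the same maximal elements. At such an element
`A`, let `S` be the union of the elements of `F` strictly below `A`: connectedness gives
`A ⊄ S`, so by fittedness `Q_A (A \ S) > 0`, while `A \ S` is `Q_B`-null for every other
`B ∈ F`, since such a `B` lies in `S` or is `⊥`-separated, hence disjoint, from `A`. Hence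
`α_A Q_A (A \ S) = μ (A \ S) ≥ α'_A Q_A (A \ S)`, and symmetrically, so the coefficients of the
maximal elements agree. Subtracting their (finite) contribution and inducting on the size of the
forest gives the rest.
-/

open MeasureTheory
open scoped NNReal ENNReal

/-- The support of a measure on a topological space: the complement of the union of all open
null sets. -/
def msupport {Ω : Type*} [TopologicalSpace Ω] [MeasurableSpace Ω]
    (μ : Measure Ω) : Set Ω :=
  (⋃₀ {O : Set Ω | IsOpen O ∧ μ O = 0})ᶜ

open Finset

namespace MeasureTheory.Measure

variable {Ω : Type*} [TopologicalSpace Ω] [MeasurableSpace Ω]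

lemma support_smul {c : ℝ≥0∞} (hc : c ≠ 0) (μ : Measure Ω) : (c • μ).support = μ.support := by
  ext x
  simp [mem_support_iff_forall, pos_iff_ne_zero, hc]

lemma support_finset_sum {ι : Type*} (s : Finset ι) (μ : ι → Measure Ω) :
    (∑ i ∈ s, μ i).support = ⋃ i ∈ s, (μ i).support := by
  classical
  induction s using Finset.induction_on with
  | empty => simp
  | insert i s hi ih => rw [sum_insert hi, support_add, ih, set_biUnion_insert]

end MeasureTheory.Measure

lemma msupport_eq_support {Ω : Type*} [TopologicalSpace Ω] [MeasurableSpace Ω]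
    (μ : Measure Ω) : msupport μ = μ.support := by
  rw [msupport, ← Measure.compl_support_eq_sUnion, compl_compl]

section Separation

variable {Ω : Type*} {perp : Set Ω → Set Ω → Prop}

lemma disjoint_of_perp (hsymm : ∀ A B, perp A B → perp B A) (hrefl : ∀ B, perp B B → B = ∅)
    (hmono : ∀ A A' B, A ⊆ A' → perp A' B → perp A B) {A B : Set Ω} (h : perp A B) :
    Disjoint A B := by
  refine Set.disjoint_left.mpr fun x hxA hxB => Set.singleton_ne_empty x (hrefl _ ?_)
  have hxB' : perp {x} B := hmono _ _ _ (Set.singleton_subset_iff.mpr hxA) h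
  exact hmono _ _ _ (Set.singleton_subset_iff.mpr hxB) (hsymm _ _ hxB')

def SeparationConnected [TopologicalSpace Ω] (𝒜 : Set (Set Ω))
    (perp : Set Ω → Set Ω → Prop) : Prop :=
  ∀ A ∈ 𝒜, ∀ (k : ℕ) (B : Fin k → Set Ω), (∀ i, IsClosed (B i)) →
    (∀ i j, i ≠ j → perp (B i) (B j)) → A ⊆ ⋃ i, B i → ∃ i, A ⊆ B i

def IsForest (perp : Set Ω → Set Ω → Prop) (F : Finset (Set Ω)) : Prop :=
  ∀ A ∈ F, ∀ A' ∈ F, perp A A' ∨ A ⊆ A' ∨ A' ⊆ A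

variable {F G : Finset (Set Ω)} {A B : Set Ω}

lemma IsForest.mono (hF : IsForest perp F) (hGF : G ⊆ F) : IsForest perp G :=
  fun A hA A' hA' => hF A (hGF hA) A' (hGF hA')

lemma IsForest.perp_of_maximal (hF : IsForest perp F) (hA : Maximal (· ∈ F) A)
    (hB : Maximal (· ∈ F) B) (hAB : A ≠ B) : perp A B := by
  rcases hF A hA.1 B hB.1 with h | h | h
  · exact h
  · exact absurd (hA.eq_of_le hB.1 h) hAB
  · exact absurd (hB.eq_of_le hA.1 h).symm hAB

variable [TopologicalSpace Ω] {𝒜 : Set (Set Ω)}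

lemma SeparationConnected.exists_subset_of_pairwise (hconn : SeparationConnected 𝒜 perp)
    (hA : A ∈ 𝒜) (hGc : ∀ B ∈ G, IsClosed B) (hGp : (G : Set (Set Ω)).Pairwise perp)
    (hcov : A ⊆ ⋃ B ∈ G, B) : ∃ B ∈ G, A ⊆ B := by
  let e := G.equivFin.symm
  obtain ⟨i, hi⟩ := hconn A hA G.card (fun i => e i) (fun i => hGc _ (e i).2)
    (fun i j hij => hGp (e i).2 (e j).2 (Subtype.val_injective.ne (e.injective.ne hij)))
    (by rwa [e.surjective.iUnion_comp (fun B : G => (B : Set Ω)), Set.iUnion_subtype])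
  exact ⟨e i, (e i).2, hi⟩

lemma IsForest.exists_subset_of_subset_biUnion (hconn : SeparationConnected 𝒜 perp)
    (hF : IsForest perp F) (hFc : ∀ B ∈ F, IsClosed B) (hA : A ∈ 𝒜)
    (hcov : A ⊆ ⋃ B ∈ F, B) : ∃ B ∈ F, A ⊆ B := by
  classical
  have hcovM : A ⊆ ⋃ B ∈ F.filter (Maximal (· ∈ F)), B := by
    refine hcov.trans (Set.iUnion₂_subset fun B hB => ?_)
    obtain ⟨C, hBC, hC⟩ := F.exists_le_maximal hB
    exact hBC.trans (Set.subset_biUnion_of_mem (u := id) (mem_filter.mpr ⟨hC.1, hC⟩))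
  obtain ⟨B, hB, hAB⟩ := hconn.exists_subset_of_pairwise hA
    (fun B hB => hFc B (filter_subset _ _ hB))
    (fun B hB C hC hBC => hF.perp_of_maximal (mem_filter.mp hB).2 (mem_filter.mp hC).2 hBC)
    hcovM
  exact ⟨B, filter_subset _ _ hB, hAB⟩

lemma IsForest.maximal_of_biUnion_eq (hconn : SeparationConnected 𝒜 perp)
    (h𝒜 : ∀ A ∈ 𝒜, IsClosed A) (hF : IsForest perp F) (hG : IsForest perp G)
    (hF𝒜 : ∀ A ∈ F, A ∈ 𝒜) (hG𝒜 : ∀ A ∈ G, A ∈ 𝒜)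
    (hground : ⋃ A ∈ F, A = ⋃ A ∈ G, A) (hA : Maximal (· ∈ F) A) : Maximal (· ∈ G) A := by
  have hle : ∀ C ∈ G, A ⊆ C → C ⊆ A := by
    intro C hC hAC
    obtain ⟨D, hD, hCD⟩ := hF.exists_subset_of_subset_biUnion hconn (fun B hB => h𝒜 B (hF𝒜 B hB))
      (hG𝒜 C hC) (hground ▸ Set.subset_biUnion_of_mem (u := id) hC)
    exact hA.eq_of_le hD (hAC.trans hCD) ▸ hCD
  obtain ⟨C, hC, hAC⟩ := hG.exists_subset_of_subset_biUnion hconn (fun B hB => h𝒜 B (hG𝒜 B hB))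
    (hF𝒜 A hA.1) (hground ▸ Set.subset_biUnion_of_mem (u := id) hA.1)
  have hCA : C = A := (hle C hC hAC).antisymm hAC
  exact ⟨hCA ▸ hC, fun C hC hAC => hle C hC hAC⟩

end Separation

section SimpleMeasure

variable {Ω : Type*} [MeasurableSpace Ω]

noncomputable def simpleMeasure (Q : Set Ω → Measure Ω) (α : Set Ω → ℝ≥0)
    (F : Finset (Set Ω)) : Measure Ω :=
  ∑ A ∈ F, (α A : ℝ≥0∞) • Q A

variable {Q : Set Ω → Measure Ω} {α α' : Set Ω → ℝ≥0} {F F' : Finset (Set Ω)} {A E : Set Ω}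

lemma support_simpleMeasure [TopologicalSpace Ω] (hfit : ∀ A ∈ F, (Q A).support = A)
    (hα : ∀ A ∈ F, 0 < α A) : (simpleMeasure Q α F).support = ⋃ A ∈ F, A := by
  rw [simpleMeasure, Measure.support_finset_sum]
  refine Set.iUnion₂_congr fun A hA => ?_
  rw [Measure.support_smul (by exact_mod_cast (hα A hA).ne'), hfit A hA]

lemma simpleMeasure_congr (h : ∀ A ∈ F, α A = α' A) :
    simpleMeasure Q α F = simpleMeasure Q α' F :=
  sum_congr rfl fun A hA => by rw [h A hA]

lemma simpleMeasure_sdiff_add {M : Finset (Set Ω)} (hMF : M ⊆ F) :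
    simpleMeasure Q α (F \ M) + simpleMeasure Q α M = simpleMeasure Q α F :=
  sum_sdiff hMF

lemma simpleMeasure_apply (F : Finset (Set Ω)) (E : Set Ω) :
    simpleMeasure Q α F E = ∑ A ∈ F, α A * Q A E := by
  simp [simpleMeasure, Measure.finsetSum_apply]

lemma mul_apply_le_simpleMeasure (hA : A ∈ F) : α A * Q A E ≤ simpleMeasure Q α F E := by
  rw [simpleMeasure_apply]
  exact single_le_sum (f := fun B => (α B : ℝ≥0∞) * Q B E) (fun _ _ => zero_le) hA

lemma simpleMeasure_apply_of_disjoint (hQ : ∀ B ∈ F, Q B Bᶜ = 0) (hA : A ∈ F)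
    (hE : ∀ B ∈ F, B ≠ A → Disjoint B E) : simpleMeasure Q α F E = α A * Q A E := by
  rw [simpleMeasure_apply, sum_eq_single_of_mem A hA]
  intro B hB hBA
  rw [measure_mono_null (hE B hB hBA).subset_compl_left (hQ B hB), mul_zero]

lemma simpleMeasure_apply_ne_top (hQfin : ∀ A ∈ F, IsFiniteMeasure (Q A)) (E : Set Ω) :
    simpleMeasure Q α F E ≠ ∞ := by
  rw [simpleMeasure_apply]
  refine ENNReal.sum_ne_top.mpr fun A hA => ENNReal.mul_ne_top ENNReal.coe_ne_top ?_
  have := hQfin A hA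
  exact measure_ne_top _ _

lemma simpleMeasure_sdiff_eq_of_eq {M : Finset (Set Ω)} (hQfin : ∀ A ∈ M, IsFiniteMeasure (Q A))
    (hMF : M ⊆ F) (hMF' : M ⊆ F') (hαM : ∀ A ∈ M, α A = α' A)
    (heq : simpleMeasure Q α F = simpleMeasure Q α' F') :
    simpleMeasure Q α (F \ M) = simpleMeasure Q α' (F' \ M) := by
  have hsplit : simpleMeasure Q α (F \ M) + simpleMeasure Q α M
      = simpleMeasure Q α' (F' \ M) + simpleMeasure Q α M := by
    rw [simpleMeasure_sdiff_add hMF, simpleMeasure_congr hαM, simpleMeasure_sdiff_add hMF', heq]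
  ext E -
  exact (ENNReal.add_left_inj (simpleMeasure_apply_ne_top hQfin E)).mp
    (by simpa using congr($hsplit E))

end SimpleMeasure

section Uniqueness

variable {Ω : Type*} [TopologicalSpace Ω] [MeasurableSpace Ω]
  {𝒜 : Set (Set Ω)} {perp : Set Ω → Set Ω → Prop} {Q : Set Ω → Measure Ω}
  {α α' : Set Ω → ℝ≥0} {F F' : Finset (Set Ω)} {A : Set Ω}

lemma coeff_le_of_maximal (hconn : SeparationConnected 𝒜 perp)
    (hdisj : ∀ A B, perp A B → Disjoint A B) (h𝒜 : ∀ A ∈ 𝒜, IsClosed A)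
    (hQfin : ∀ A ∈ 𝒜, IsFiniteMeasure (Q A)) (hQ : ∀ A ∈ 𝒜, Q A Aᶜ = 0)
    (hfit : ∀ A ∈ 𝒜, (Q A).support = A) (hF : IsForest perp F) (hF𝒜 : ∀ A ∈ F, A ∈ 𝒜)
    (hA : Maximal (· ∈ F) A) (hAF' : A ∈ F')
    (heq : simpleMeasure Q α F = simpleMeasure Q α' F') : α' A ≤ α A := by
  classical
  have hA𝒜 := hF𝒜 A hA.1
  have := hQfin A hA𝒜
  set G := F.filter (· ⊂ A)
  set S := ⋃ B ∈ G, B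
  have hS : IsClosed S :=
    G.finite_toSet.isClosed_biUnion fun B hB => h𝒜 B (hF𝒜 B (mem_filter.mp hB).1)
  have hAS : ¬ A ⊆ S := by
    intro hAS
    obtain ⟨B, hB, hAB⟩ := (hF.mono (filter_subset _ _)).exists_subset_of_subset_biUnion hconn
      (fun B hB => h𝒜 B (hF𝒜 B (mem_filter.mp hB).1)) hA𝒜 hAS
    exact (mem_filter.mp hB).2.not_subset hAB
  have hpos : Q A (A \ S) ≠ 0 := by
    rw [Set.sdiff_eq, Set.inter_comm, measure_inter_conull (hQ A hA𝒜)]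
    exact fun h0 => hAS (hfit A hA𝒜 ▸ Measure.support_subset_of_isClosed hS (mem_ae_iff.mpr h0))
  have hdisjE : ∀ B ∈ F, B ≠ A → Disjoint B (A \ S) := by
    intro B hB hBA
    rcases hF B hB A hA.1 with h | h | h
    · exact (hdisj B A h).mono_right Set.sdiff_subset
    · exact Set.disjoint_sdiff_right.mono_left
        (Set.subset_biUnion_of_mem (u := id) (mem_filter.mpr ⟨hB, h.ssubset_of_ne hBA⟩))
    · exact absurd (hA.eq_of_le hB h).symm hBA
  have hle : α' A * Q A (A \ S) ≤ α A * Q A (A \ S) := calc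
    _ ≤ simpleMeasure Q α' F' (A \ S) := mul_apply_le_simpleMeasure hAF'
    _ = α A * Q A (A \ S) := by
      rw [← heq, simpleMeasure_apply_of_disjoint (fun B hB => hQ B (hF𝒜 B hB)) hA.1 hdisjE]
  exact_mod_cast (ENNReal.mul_le_mul_iff_left hpos (measure_ne_top _ _)).mp hle

theorem eq_of_simpleMeasure_eq (hconn : SeparationConnected 𝒜 perp)
    (hdisj : ∀ A B, perp A B → Disjoint A B) (h𝒜 : ∀ A ∈ 𝒜, IsClosed A)
    (hQfin : ∀ A ∈ 𝒜, IsFiniteMeasure (Q A)) (hQ : ∀ A ∈ 𝒜, Q A Aᶜ = 0)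
    (hfit : ∀ A ∈ 𝒜, (Q A).support = A) (hF : IsForest perp F) (hF' : IsForest perp F')
    (hF𝒜 : ∀ A ∈ F, A ∈ 𝒜) (hF'𝒜 : ∀ A ∈ F', A ∈ 𝒜) (hα : ∀ A ∈ F, 0 < α A)
    (hα' : ∀ A ∈ F', 0 < α' A) (heq : simpleMeasure Q α F = simpleMeasure Q α' F') :
    F = F' ∧ ∀ A ∈ F, α A = α' A := by
  classical
  induction F using Finset.strongInduction generalizing F' with
  | H F ih =>
  have hground : ⋃ A ∈ F, A = ⋃ A ∈ F', A := by
    rw [← support_simpleMeasure (fun A hA => hfit A (hF𝒜 A hA)) hα, heq,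
      support_simpleMeasure (fun A hA => hfit A (hF'𝒜 A hA)) hα']
  set M := F.filter (Maximal (· ∈ F))
  have hMF : M ⊆ F := filter_subset _ _
  have hmax : ∀ {A}, Maximal (· ∈ F) A ↔ Maximal (· ∈ F') A := fun {A} =>
    ⟨hF.maximal_of_biUnion_eq hconn h𝒜 hF' hF𝒜 hF'𝒜 hground,
      hF'.maximal_of_biUnion_eq hconn h𝒜 hF hF'𝒜 hF𝒜 hground.symm⟩
  have hMF' : M ⊆ F' := fun A hA => (hmax.mp (mem_filter.mp hA).2).1
  have hαM : ∀ A ∈ M, α A = α' A := fun A hA => le_antisymm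
    (coeff_le_of_maximal hconn hdisj h𝒜 hQfin hQ hfit hF' hF'𝒜 (hmax.mp (mem_filter.mp hA).2)
      (hMF hA) heq.symm)
    (coeff_le_of_maximal hconn hdisj h𝒜 hQfin hQ hfit hF hF𝒜 (mem_filter.mp hA).2 (hMF' hA) heq)
  have hrest :=
    simpleMeasure_sdiff_eq_of_eq (fun A hA => hQfin A (hF𝒜 A (hMF hA))) hMF hMF' hαM heq
  rcases F.eq_empty_or_nonempty with rfl | hFne
  · refine ⟨(F'.eq_empty_of_forall_notMem fun A hA => ?_).symm, by simp⟩
    obtain ⟨B, hB⟩ := F'.exists_maximal ⟨A, hA⟩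
    exact notMem_empty B (hmax.mpr hB).1
  obtain ⟨A, hA⟩ := F.exists_maximal hFne
  have hMne : M.Nonempty := ⟨A, mem_filter.mpr ⟨hA.1, hA⟩⟩
  obtain ⟨hFF', hαrest⟩ := ih (F \ M) (sdiff_ssubset hMF hMne) (hF.mono sdiff_subset)
    (hF'.mono sdiff_subset) (fun A hA => hF𝒜 A (mem_sdiff.mp hA).1)
    (fun A hA => hF'𝒜 A (mem_sdiff.mp hA).1) (fun A hA => hα A (mem_sdiff.mp hA).1)
    (fun A hA => hα' A (mem_sdiff.mp hA).1) hrest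
  refine ⟨?_, fun A hA => ?_⟩
  · rw [← sdiff_union_of_subset hMF, hFF', sdiff_union_of_subset hMF']
  · by_cases hAM : A ∈ M
    · exact hαM A hAM
    · exact hαrest A (mem_sdiff.mpr ⟨hA, hAM⟩)

end Uniqueness

theorem simple_measure_representation_unique_general {Ω : Type*} [TopologicalSpace Ω]
    [MeasurableSpace Ω] [BorelSpace Ω]
    (𝒜 : Set (Set Ω))
    (h𝒜 : ∀ A ∈ 𝒜, A.Nonempty ∧ IsClosed A ∧ MeasurableSet A)
    (perp : Set Ω → Set Ω → Prop)
    (hsymm : ∀ A B : Set Ω, perp A B → perp B A)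
    (hrefl : ∀ B : Set Ω, perp B B → B = ∅)
    (hmono : ∀ A A' B : Set Ω, A ⊆ A' → perp A' B → perp A B)
    (hconn : ∀ A ∈ 𝒜, ∀ (k : ℕ) (B : Fin k → Set Ω), (∀ i, IsClosed (B i)) →
      (∀ i j, i ≠ j → perp (B i) (B j)) → A ⊆ ⋃ i, B i → ∃ i, A ⊆ B i)
    (Q : Set Ω → Measure Ω)
    (hQprob : ∀ A ∈ 𝒜, IsProbabilityMeasure (Q A))
    (hQreg : ∀ A ∈ 𝒜, (Q A).InnerRegular)
    -- fittedness
    (hfit : ∀ A ∈ 𝒜, msupport (Q A) = A)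
    -- two representing finite ⊥-forests with values in 𝒜
    (F F' : Finset (Set Ω))
    (hF𝒜 : ∀ A ∈ F, A ∈ 𝒜) (hF'𝒜 : ∀ A ∈ F', A ∈ 𝒜)
    (hFforest : ∀ A ∈ F, ∀ A' ∈ F, perp A A' ∨ A ⊆ A' ∨ A' ⊆ A)
    (hF'forest : ∀ A ∈ F', ∀ A' ∈ F', perp A A' ∨ A ⊆ A' ∨ A' ⊆ A)
    (α α' : Set Ω → ℝ≥0)
    (hα : ∀ A ∈ F, 0 < α A) (hα' : ∀ A ∈ F', 0 < α' A)
    (heq : ∑ A ∈ F, ((α A : ℝ≥0∞) • Q A) = ∑ A ∈ F', ((α' A : ℝ≥0∞) • Q A)) :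
    F = F' ∧ (∀ A ∈ F, α A = α' A) ∧
      msupport (∑ A ∈ F, ((α A : ℝ≥0∞) • Q A)) = ⋃ A ∈ F, A := by
  have hfit' : ∀ A ∈ 𝒜, (Q A).support = A := fun A hA => msupport_eq_support (Q A) ▸ hfit A hA
  have hQ : ∀ A ∈ 𝒜, Q A Aᶜ = 0 := fun A hA => by
    have := hQreg A hA
    simpa [hfit' A hA] using Measure.measure_compl_support_of_innerRegular (μ := Q A)
  have hQfin : ∀ A ∈ 𝒜, IsFiniteMeasure (Q A) := fun A hA => by
    have := hQprob A hA
    infer_instance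
  obtain ⟨hFF', hαα'⟩ := eq_of_simpleMeasure_eq hconn
    (fun A B => disjoint_of_perp hsymm hrefl hmono) (fun A hA => (h𝒜 A hA).2.1) hQfin hQ hfit'
    hFforest hF'forest hF𝒜 hF'𝒜 hα hα' heq
  refine ⟨hFF', hαα', ?_⟩
  rw [msupport_eq_support]
  exact support_simpleMeasure (fun A hA => hfit' A (hF𝒜 A hA)) hα

/-- Uniqueness of the representation of a simple measure on a finite `⊥`-forest,
given a clustering base `(𝒜, (Q_A), ⊥)` (separation relation, fitted and flat base measures);
moreover, the support of the simple measure is the ground of its forest. -/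
theorem simple_measure_representation_unique {Ω : Type*} [TopologicalSpace Ω] [T2Space Ω]
    [MeasurableSpace Ω] [BorelSpace Ω]
    (𝒜 : Set (Set Ω))
    (h𝒜 : ∀ A ∈ 𝒜, A.Nonempty ∧ IsClosed A ∧ MeasurableSet A)
    (perp : Set Ω → Set Ω → Prop)
    (hsymm : ∀ A B : Set Ω, perp A B → perp B A)
    (hrefl : ∀ B : Set Ω, perp B B → B = ∅)
    (hmono : ∀ A A' B : Set Ω, A ⊆ A' → perp A' B → perp A B)
    (hconn : ∀ A ∈ 𝒜, ∀ (k : ℕ) (B : Fin k → Set Ω), (∀ i, IsClosed (B i)) →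
      (∀ i j, i ≠ j → perp (B i) (B j)) → A ⊆ ⋃ i, B i → ∃ i, A ⊆ B i)
    (Q : Set Ω → Measure Ω)
    (hQprob : ∀ A ∈ 𝒜, IsProbabilityMeasure (Q A))
    (hQreg : ∀ A ∈ 𝒜, (Q A).InnerRegular)
    -- fittedness
    (hfit : ∀ A ∈ 𝒜, msupport (Q A) = A)
    -- flatness
    (hflat : ∀ A ∈ 𝒜, ∀ A' ∈ 𝒜, A ⊆ A' →
      Q A' A = 0 ∨ ∀ B : Set Ω, MeasurableSet B → Q A B = Q A' (B ∩ A) / Q A' A)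
    -- two representing finite ⊥-forests with values in 𝒜
    (F F' : Finset (Set Ω))
    (hF𝒜 : ∀ A ∈ F, A ∈ 𝒜) (hF'𝒜 : ∀ A ∈ F', A ∈ 𝒜)
    (hFforest : ∀ A ∈ F, ∀ A' ∈ F, perp A A' ∨ A ⊆ A' ∨ A' ⊆ A)
    (hF'forest : ∀ A ∈ F', ∀ A' ∈ F', perp A A' ∨ A ⊆ A' ∨ A' ⊆ A)
    (α α' : Set Ω → ℝ≥0)
    (hα : ∀ A ∈ F, 0 < α A) (hα' : ∀ A ∈ F', 0 < α' A)
    (heq : ∑ A ∈ F, ((α A : ℝ≥0∞) • Q A) = ∑ A ∈ F', ((α' A : ℝ≥0∞) • Q A)) :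
    F = F' ∧ (∀ A ∈ F, α A = α' A) ∧
      msupport (∑ A ∈ F, ((α A : ℝ≥0∞) • Q A)) = ⋃ A ∈ F, A :=
  simple_measure_representation_unique_general 𝒜 h𝒜 perp hsymm hrefl hmono hconn Q hQprob hQreg hfit
    F F' hF𝒜 hF'𝒜 hFforest hF'forest α α' hα hα' heq
end

section
/- Let Q be a finite measure on a measurable space and Q₁ ≤ Q₂ ≤ … ≤ Q be measures, with Radon–Nikodym derivatives hₙ := dQₙ/dQ. Then h₁ ≤ h₂ ≤ … ≤ 1 holds Q-almost everywhere, and the following are equivalent: (i) Qₙ(B) → Q(B) for every measurable set B; (ii) hₙ → 1 Q-almost everywhere; (iii) ∫ |1 − hₙ| dQ → 0. -/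
open MeasureTheory Filter Topology
open scoped ENNReal

/-!
Since `Qₙ ≤ Q`, the densities satisfy `hₙ ≤ 1`, and comparing `∫_B hₙ dQ = Qₙ(B)` over all `B`
makes them a.e. increasing. For (i) ⇒ (ii), monotone convergence gives
`∫ sup hₙ dQ = lim Qₙ(Ω) = Q(Ω) = ∫ 1 dQ`, which together with `sup hₙ ≤ 1` forces `sup hₙ = 1`
a.e. Dominated convergence gives (ii) ⇒ (iii), and `Q(B) ≤ Qₙ(B) + ∫ (1 - hₙ) dQ` gives
(iii) ⇒ (i).
-/

section Lintegral

variable {Ω : Type*} [MeasurableSpace Ω] {μ : Measure Ω} {f : ℕ → Ω → ℝ≥0∞} {g : Ω → ℝ≥0∞}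

theorem ae_tendsto_of_monotone_of_tendsto_lintegral (hf : ∀ n, AEMeasurable (f n) μ)
    (hmono : ∀ᵐ x ∂μ, Monotone fun n => f n x) (hfg : ∀ n, f n ≤ᵐ[μ] g) (hg : AEMeasurable g μ)
    (hg_fin : ∫⁻ x, g x ∂μ ≠ ∞)
    (hlim : Tendsto (fun n => ∫⁻ x, f n x ∂μ) atTop (𝓝 (∫⁻ x, g x ∂μ))) :
    ∀ᵐ x ∂μ, Tendsto (fun n => f n x) atTop (𝓝 (g x)) := by
  have hsup_le : (fun x => ⨆ n, f n x) ≤ᵐ[μ] g := by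
    filter_upwards [ae_all_iff.2 hfg] with x hx using iSup_le hx
  have hlintegral_sup : ∫⁻ x, ⨆ n, f n x ∂μ = ∫⁻ x, g x ∂μ := by
    rw [lintegral_iSup' hf hmono]
    exact tendsto_nhds_unique (tendsto_atTop_iSup fun _ _ h => lintegral_mono_ae
      (by filter_upwards [hmono] with x hx using hx h)) hlim
  have hsup_eq : (fun x => ⨆ n, f n x) =ᵐ[μ] g :=
    ae_eq_of_ae_le_of_lintegral_le hsup_le (hlintegral_sup ▸ hg_fin) hg hlintegral_sup.ge
  filter_upwards [hmono, hsup_eq] with x hx hx_sup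
  exact hx_sup ▸ tendsto_atTop_iSup hx

theorem tendsto_lintegral_sub_of_ae_tendsto (hf : ∀ n, AEMeasurable (f n) μ)
    (hg : AEMeasurable g μ) (hg_fin : ∫⁻ x, g x ∂μ ≠ ∞)
    (hlim : ∀ᵐ x ∂μ, Tendsto (fun n => f n x) atTop (𝓝 (g x))) :
    Tendsto (fun n => ∫⁻ x, g x - f n x ∂μ) atTop (𝓝 0) := by
  have hlim_sub : ∀ᵐ x ∂μ, Tendsto (fun n => g x - f n x) atTop (𝓝 0) := by
    filter_upwards [hlim, ae_lt_top' hg hg_fin] with x hx hgx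
    simpa using ENNReal.Tendsto.sub tendsto_const_nhds hx (Or.inl hgx.ne)
  simpa using tendsto_lintegral_of_dominated_convergence' g (fun n => hg.sub (hf n))
    (fun n => ae_of_all _ fun x => tsub_le_self) hg_fin hlim_sub

end Lintegral

namespace MeasureTheory.Measure

variable {Ω : Type*} [MeasurableSpace Ω] {ν : Measure Ω}

theorem rnDeriv_le_rnDeriv_of_le {μ₁ μ₂ : Measure Ω} [HaveLebesgueDecomposition μ₁ ν]
    [HaveLebesgueDecomposition μ₂ ν] [SigmaFinite ν] (h : μ₁ ≤ μ₂) (hac : μ₂ ≪ ν) :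
    μ₁.rnDeriv ν ≤ᵐ[ν] μ₂.rnDeriv ν := by
  refine ae_le_of_forall_setLIntegral_le_of_sigmaFinite (measurable_rnDeriv _ _) fun s hs _ => ?_
  rw [setLIntegral_rnDeriv' ((absolutelyContinuous_of_le h).trans hac) hs,
    setLIntegral_rnDeriv' hac hs]
  exact h s

theorem ae_monotone_rnDeriv {μs : ℕ → Measure Ω} [∀ n, HaveLebesgueDecomposition (μs n) ν]
    [SigmaFinite ν] (hmono : Monotone μs) (hac : ∀ n, μs n ≪ ν) :
    ∀ᵐ x ∂ν, Monotone fun n => (μs n).rnDeriv ν x := by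
  filter_upwards [ae_all_iff.2 fun n => rnDeriv_le_rnDeriv_of_le (hmono n.le_succ) (hac (n + 1))]
    with x hx using monotone_nat_of_le_succ hx

theorem measure_le_add_lintegral_one_sub_rnDeriv (μ ν : Measure Ω) (s : Set Ω) :
    ν s ≤ μ s + ∫⁻ x, 1 - μ.rnDeriv ν x ∂ν :=
  calc ν s = ∫⁻ _ in s, 1 ∂ν := setLIntegral_one s |>.symm
    _ ≤ ∫⁻ x in s, μ.rnDeriv ν x + (1 - μ.rnDeriv ν x) ∂ν :=
      lintegral_mono fun _ => le_add_tsub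
    _ = ∫⁻ x in s, μ.rnDeriv ν x ∂ν + ∫⁻ x in s, 1 - μ.rnDeriv ν x ∂ν :=
      lintegral_add_left (measurable_rnDeriv _ _) _
    _ ≤ μ s + ∫⁻ x, 1 - μ.rnDeriv ν x ∂ν :=
      add_le_add (setLIntegral_rnDeriv_le s) (setLIntegral_le_lintegral _ _)

theorem tendsto_measure_of_tendsto_lintegral_one_sub_rnDeriv {μs : ℕ → Measure Ω}
    (hle : ∀ n, μs n ≤ ν) {s : Set Ω} (hs : ν s ≠ ∞)
    (h : Tendsto (fun n => ∫⁻ x, 1 - (μs n).rnDeriv ν x ∂ν) atTop (𝓝 0)) :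
    Tendsto (fun n => μs n s) atTop (𝓝 (ν s)) := by
  have hlower : Tendsto (fun n => ν s - ∫⁻ x, 1 - (μs n).rnDeriv ν x ∂ν) atTop (𝓝 (ν s)) := by
    simpa using ENNReal.Tendsto.sub tendsto_const_nhds h (Or.inl hs)
  refine tendsto_of_tendsto_of_tendsto_of_le_of_le hlower tendsto_const_nhds (fun n => ?_)
    (fun n => hle n s)
  exact tsub_le_iff_right.2 (measure_le_add_lintegral_one_sub_rnDeriv _ _ s)

theorem ae_tendsto_rnDeriv_of_tendsto_measure_univ [IsFiniteMeasure ν] {μs : ℕ → Measure Ω}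
    (hmono : Monotone μs) (hle : ∀ n, μs n ≤ ν)
    (h : Tendsto (fun n => μs n Set.univ) atTop (𝓝 (ν Set.univ))) :
    ∀ᵐ x ∂ν, Tendsto (fun n => (μs n).rnDeriv ν x) atTop (𝓝 1) := by
  have := fun n => isFiniteMeasure_of_le ν (hle n)
  have hac n : μs n ≪ ν := absolutelyContinuous_of_le (hle n)
  refine ae_tendsto_of_monotone_of_tendsto_lintegral
    (fun n => (measurable_rnDeriv _ _).aemeasurable) (ae_monotone_rnDeriv hmono hac)
    (fun n => rnDeriv_le_one_of_le (hle n)) aemeasurable_const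
    (by simp) ?_
  simpa [lintegral_rnDeriv (hac _)] using h

end MeasureTheory.Measure

/-- For a finite measure `Q` and a monotone sequence `Q₁ ≤ Q₂ ≤ … ≤ Q` with
Radon–Nikodym derivatives `hₙ = dQₙ/dQ`, one has `h₁ ≤ h₂ ≤ … ≤ 1` `Q`-a.e., and the following
are equivalent: (i) `Qₙ(B) → Q(B)` for all measurable `B`; (ii) `hₙ → 1` `Q`-a.e.;
(iii) `∫ |1 − hₙ| dQ → 0`. -/
theorem monotone_density_convergence {Ω : Type*} [MeasurableSpace Ω]
    (Q : Measure Ω) [IsFiniteMeasure Q]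
    (Qs : ℕ → Measure Ω) (hmono : Monotone Qs) (hle : ∀ n, Qs n ≤ Q) :
    (∀ n, ∀ᵐ x ∂Q, (Qs n).rnDeriv Q x ≤ 1) ∧
    (∀ n m, n ≤ m → ∀ᵐ x ∂Q, (Qs n).rnDeriv Q x ≤ (Qs m).rnDeriv Q x) ∧
    ((∀ B : Set Ω, MeasurableSet B → Tendsto (fun n => Qs n B) atTop (nhds (Q B))) ↔
      (∀ᵐ x ∂Q, Tendsto (fun n => (Qs n).rnDeriv Q x) atTop (nhds 1))) ∧
    ((∀ᵐ x ∂Q, Tendsto (fun n => (Qs n).rnDeriv Q x) atTop (nhds 1)) ↔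
      Tendsto (fun n => ∫⁻ x, (1 - (Qs n).rnDeriv Q x) ∂Q) atTop (nhds 0)) := by
  have := fun n => isFiniteMeasure_of_le Q (hle n)
  have h12 (hi : ∀ B : Set Ω, MeasurableSet B → Tendsto (fun n => Qs n B) atTop (𝓝 (Q B))) :=
    Measure.ae_tendsto_rnDeriv_of_tendsto_measure_univ hmono hle (hi Set.univ MeasurableSet.univ)
  have h23 (hii : ∀ᵐ x ∂Q, Tendsto (fun n => (Qs n).rnDeriv Q x) atTop (𝓝 1)) :=
    tendsto_lintegral_sub_of_ae_tendsto (g := 1)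
      (fun n => (Measure.measurable_rnDeriv _ _).aemeasurable) aemeasurable_const (by simp) hii
  have h31 (hiii : Tendsto (fun n => ∫⁻ x, 1 - (Qs n).rnDeriv Q x ∂Q) atTop (𝓝 0))
      (B : Set Ω) (_ : MeasurableSet B) :=
    Measure.tendsto_measure_of_tendsto_lintegral_one_sub_rnDeriv hle (measure_ne_top Q B) hiii
  exact ⟨fun n => Measure.rnDeriv_le_one_of_le (hle n),
    fun n m hnm =>
      Measure.rnDeriv_le_rnDeriv_of_le (hmono hnm) (Measure.absolutelyContinuous_of_le (hle m)),
    ⟨h12, fun hii => h31 (h23 hii)⟩, ⟨h23, fun hiii => h12 (h31 hiii)⟩⟩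
end
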